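/- arXiv:2401.01689 — 4 statements merged into one kernel-verified Lean document; each statement's English description precedes it below -/
import Mathlib

section
/- Discrete conservation of momentum (Theorem 2.1, case g = v): the total collisional force vanishes, Σ_{p=1}^N w_p U_p = 0 in ℝ^{d_v}, where U_p = Σ_{q=1}^N w_q ψ(x_p − x_q) A(v_p − v_q) b_{p,q}. -/
open Matrix
open scoped Classical

/-- The Landau collision kernel `A(z) = C ‖z‖^(γ+2) (I − z zᵀ/‖z‖²)` for `z ≠ 0`,
with the convention `A(0) = 0`. -/
noncomputable def landauA (d : ℕ) (C γ : ℝ) (z : Fin d → ℝ) :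
    Matrix (Fin d) (Fin d) ℝ :=
  if z = 0 then 0
  else (C * Real.sqrt (z ⬝ᵥ z) ^ (γ + 2)) •
    (1 - (z ⬝ᵥ z)⁻¹ • Matrix.vecMulVec z z)

lemma landauA_neg (d : ℕ) (C γ : ℝ) (z : Fin d → ℝ) :
    landauA d C γ (-z) = landauA d C γ z := by
  unfold landauA
  have h1 : (-z : Fin d → ℝ) ⬝ᵥ (-z) = z ⬝ᵥ z := by
    simp [neg_dotProduct, dotProduct_neg]
  have h2 : Matrix.vecMulVec (-z) (-z) = Matrix.vecMulVec z z := by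
    ext i j; simp [Matrix.vecMulVec]
  have h3 : (-z = 0) ↔ (z = 0) := neg_eq_zero
  simp [h1, h2, h3]

/-- Discrete conservation of momentum: the total collisional force vanishes,
`Σ_p w_p U_p = 0`, where `U_p = Σ_q w_q ψ(x_p − x_q) A(v_p − v_q) b_{p,q}`. -/
theorem discrete_momentum_conservation (dx dv N : ℕ) (C γ : ℝ) (hC : 0 < C)
    (w : Fin N → ℝ) (x : Fin N → Fin dx → ℝ) (v : Fin N → Fin dv → ℝ)
    (ψ : (Fin dx → ℝ) → ℝ) (hψ : ∀ y, ψ (-y) = ψ y)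
    (b : Fin N → Fin N → Fin dv → ℝ) (hb : ∀ p q, b q p = -(b p q))
    (U : Fin N → Fin dv → ℝ)
    (hU : ∀ p, U p = ∑ q : Fin N,
      (w q * ψ (x p - x q)) • (landauA dv C γ (v p - v q)).mulVec (b p q)) :
    ∑ p : Fin N, w p • U p = 0 := by
  set T : Fin N → Fin N → Fin dv → ℝ := fun p q =>
    (w p * (w q * ψ (x p - x q))) • (landauA dv C γ (v p - v q)).mulVec (b p q) with hT
  have hsum : ∑ p : Fin N, w p • U p = ∑ p : Fin N, ∑ q : Fin N, T p q := by
    refine Finset.sum_congr rfl fun p _ => ?_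
    rw [hU p, Finset.smul_sum]
    refine Finset.sum_congr rfl fun q _ => ?_
    rw [hT]; rw [smul_smul]
  have hanti : ∀ p q, T q p = -T p q := by
    intro p q
    rw [hT]
    have e1 : x q - x p = -(x p - x q) := by abel
    have e2 : v q - v p = -(v p - v q) := by abel
    simp only [e1, e2, hψ, landauA_neg, hb p q, Matrix.mulVec_neg, smul_neg]
    ring_nf
  have : ∑ p : Fin N, ∑ q : Fin N, T p q = -∑ p : Fin N, ∑ q : Fin N, T p q := by
    conv_lhs => rw [Finset.sum_comm]
    rw [← Finset.sum_neg_distrib]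
    refine Finset.sum_congr rfl fun p _ => ?_
    rw [← Finset.sum_neg_distrib]
    exact Finset.sum_congr rfl fun q _ => hanti p q
  rw [hsum]
  have h : (∑ p : Fin N, ∑ q : Fin N, T p q) + (∑ p : Fin N, ∑ q : Fin N, T p q) = 0 := by
    nth_rewrite 1 [this]; simp
  funext i
  have hi := congrFun h i
  simp only [Pi.add_apply, Pi.zero_apply] at hi ⊢
  linarith
end

section
/- Discrete conservation of kinetic energy (Theorem 2.1, case g = |v|²/2): Σ_{p=1}^N w_p v_p · U_p = 0, where U_p = Σ_{q=1}^N w_q ψ(x_p − x_q) A(v_p − v_q) b_{p,q}. -/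
open Matrix
open scoped Classical

lemma dot_landauA_mulVec (d : ℕ) (C γ : ℝ) (z b : Fin d → ℝ) :
    z ⬝ᵥ (landauA d C γ z).mulVec b = 0 := by
  unfold landauA
  by_cases hz : z = 0
  · simp [hz]
  · have hzz : z ⬝ᵥ z ≠ 0 := by
      intro h
      exact hz (by simpa using (dotProduct_self_eq_zero (v := z)).mp h)
    have hvv : (Matrix.vecMulVec z z).mulVec b = (z ⬝ᵥ b) • z := by
      ext i
      simp [Matrix.mulVec, Matrix.vecMulVec, dotProduct, Finset.mul_sum, mul_assoc,
        mul_comm, mul_left_comm]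
    simp only [hz, if_neg, ite_false, Matrix.smul_mulVec, Matrix.sub_mulVec,
      Matrix.one_mulVec, hvv, dotProduct_smul, dotProduct_sub, smul_eq_mul]
    rw [mul_comm (z ⬝ᵥ b) (z ⬝ᵥ z), inv_mul_cancel_left₀ hzz, sub_self, mul_zero]

/-- Discrete conservation of kinetic energy: `Σ_p w_p v_p · U_p = 0`, where
`U_p = Σ_q w_q ψ(x_p − x_q) A(v_p − v_q) b_{p,q}`. -/
theorem discrete_energy_conservation (dx dv N : ℕ) (C γ : ℝ) (hC : 0 < C)
    (w : Fin N → ℝ) (x : Fin N → Fin dx → ℝ) (v : Fin N → Fin dv → ℝ)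
    (ψ : (Fin dx → ℝ) → ℝ) (hψ : ∀ y, ψ (-y) = ψ y)
    (b : Fin N → Fin N → Fin dv → ℝ) (hb : ∀ p q, b q p = -(b p q))
    (U : Fin N → Fin dv → ℝ)
    (hU : ∀ p, U p = ∑ q : Fin N,
      (w q * ψ (x p - x q)) • (landauA dv C γ (v p - v q)).mulVec (b p q)) :
    ∑ p : Fin N, w p * (v p ⬝ᵥ U p) = 0 := by
  set F : Fin N → Fin N → ℝ := fun p q =>
    w p * (w q * ψ (x p - x q) * (v p ⬝ᵥ (landauA dv C γ (v p - v q)).mulVec (b p q)))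
    with hF
  have hsum : ∑ p : Fin N, w p * (v p ⬝ᵥ U p) = ∑ p : Fin N, ∑ q : Fin N, F p q := by
    refine Finset.sum_congr rfl fun p _ => ?_
    have hdp : v p ⬝ᵥ (∑ q : Fin N,
        (w q * ψ (x p - x q)) • (landauA dv C γ (v p - v q)).mulVec (b p q))
        = ∑ q : Fin N, v p ⬝ᵥ ((w q * ψ (x p - x q)) •
          (landauA dv C γ (v p - v q)).mulVec (b p q)) := by
      simp only [dotProduct, Finset.sum_apply, Finset.mul_sum]
      exact Finset.sum_comm
    rw [hU p, hdp, Finset.mul_sum]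
    refine Finset.sum_congr rfl fun q _ => ?_
    simp [hF, dotProduct_smul, mul_assoc]
  have hanti : ∀ p q, F q p = -F p q := by
    intro p q
    have hA : landauA dv C γ (v q - v p) = landauA dv C γ (v p - v q) := by
      rw [show v q - v p = -(v p - v q) by ring, landauA_neg]
    have hx : ψ (x q - x p) = ψ (x p - x q) := by
      rw [show x q - x p = -(x p - x q) by ring, hψ]
    have hkey : v q ⬝ᵥ (landauA dv C γ (v p - v q)).mulVec (b p q)
        = v p ⬝ᵥ (landauA dv C γ (v p - v q)).mulVec (b p q) := by
      have := dot_landauA_mulVec dv C γ (v p - v q) (b p q)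
      rw [sub_dotProduct] at this
      linarith
    simp only [hF, hb p q, hA, hx, Matrix.mulVec_neg, dotProduct_neg, hkey]
    ring
  rw [hsum]
  have h2 : ∑ p : Fin N, ∑ q : Fin N, F p q = -∑ p : Fin N, ∑ q : Fin N, F p q := by
    conv_lhs => rw [Finset.sum_comm]
    rw [← Finset.sum_neg_distrib]
    refine Finset.sum_congr rfl fun p _ => ?_
    rw [← Finset.sum_neg_distrib]
    exact Finset.sum_congr rfl fun q _ => hanti p q
  linarith
end

section
/- Discrete H-theorem (Theorem 2.2): suppose moreover that w_p ≥ 0 for all p, that ψ ≥ 0, and that b_{p,q} = G_p − G_q for some family of vectors G_p ∈ ℝ^{d_v}. Then the entropy production D := Σ_{p=1}^N w_p G_p · U_p satisfies D = (1/2) Σ_{p=1}^N Σ_{q=1}^N w_p w_q ψ(x_p − x_q) (G_p − G_q) · (A(v_p − v_q)(G_p − G_q)) and D ≥ 0. -/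
open Matrix
open scoped Classical

lemma vecMulVec_mulVec' (d : ℕ) (z x : Fin d → ℝ) :
    (Matrix.vecMulVec z z).mulVec x = (z ⬝ᵥ x) • z := by
  ext i
  simp [Matrix.mulVec, Matrix.vecMulVec_apply, dotProduct, Finset.mul_sum, mul_assoc, mul_comm,
    mul_left_comm]

lemma landauA_quad_nonneg (d : ℕ) (C γ : ℝ) (hC : 0 < C) (z x : Fin d → ℝ) :
    0 ≤ x ⬝ᵥ (landauA d C γ z).mulVec x := by
  unfold landauA
  by_cases hz : z = 0
  · simp [hz]
  · simp only [hz, if_false]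
    have hzz : 0 < z ⬝ᵥ z := by
      have h2 : 0 ≤ z ⬝ᵥ z := Finset.sum_nonneg fun i _ => mul_self_nonneg _
      rcases h2.lt_or_eq with h3 | h3
      · exact h3
      · exact absurd ((dotProduct_self_eq_zero).mp h3.symm) hz
    rw [Matrix.smul_mulVec, dotProduct_smul, Matrix.sub_mulVec,
      Matrix.one_mulVec, Matrix.smul_mulVec, vecMulVec_mulVec']
    have hcs : (z ⬝ᵥ x) ^ 2 ≤ (z ⬝ᵥ z) * (x ⬝ᵥ x) := by
      have := Finset.sum_mul_sq_le_sq_mul_sq Finset.univ z x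
      simpa [dotProduct, sq] using this
    have hc : 0 ≤ C * Real.sqrt (z ⬝ᵥ z) ^ (γ + 2) :=
      mul_nonneg hC.le (Real.rpow_nonneg (Real.sqrt_nonneg _) _)
    have hquad : 0 ≤ x ⬝ᵥ (x - (z ⬝ᵥ z)⁻¹ • ((z ⬝ᵥ x) • z)) := by
      rw [dotProduct_sub, dotProduct_smul, dotProduct_smul]
      have : (z ⬝ᵥ z)⁻¹ • ((z ⬝ᵥ x) • (x ⬝ᵥ z)) ≤ x ⬝ᵥ x := by
        rw [smul_eq_mul, smul_eq_mul, inv_mul_le_iff₀ hzz]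
        calc (z ⬝ᵥ x) * (x ⬝ᵥ z) = (z ⬝ᵥ x) ^ 2 := by rw [dotProduct_comm x z, sq]
          _ ≤ (z ⬝ᵥ z) * (x ⬝ᵥ x) := hcs
      linarith
    exact smul_nonneg hc hquad

/-- Discrete H-theorem: if `w_p ≥ 0`, `ψ ≥ 0`, and `b_{p,q} = G_p − G_q`, then the
entropy production `D = Σ_p w_p G_p · U_p` equals
`(1/2) Σ_{p,q} w_p w_q ψ(x_p − x_q)(G_p − G_q)·(A(v_p − v_q)(G_p − G_q))` and `D ≥ 0`. -/
theorem discrete_H_theorem (dx dv N : ℕ) (C γ : ℝ) (hC : 0 < C)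
    (w : Fin N → ℝ) (hw : ∀ p, 0 ≤ w p)
    (x : Fin N → Fin dx → ℝ) (v : Fin N → Fin dv → ℝ)
    (ψ : (Fin dx → ℝ) → ℝ) (hψ : ∀ y, ψ (-y) = ψ y) (hψ0 : ∀ y, 0 ≤ ψ y)
    (G : Fin N → Fin dv → ℝ)
    (b : Fin N → Fin N → Fin dv → ℝ) (hb : ∀ p q, b p q = G p - G q)
    (U : Fin N → Fin dv → ℝ)
    (hU : ∀ p, U p = ∑ q : Fin N,
      (w q * ψ (x p - x q)) • (landauA dv C γ (v p - v q)).mulVec (b p q)) :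
    ∑ p : Fin N, w p * (G p ⬝ᵥ U p)
      = (1 / 2) * ∑ p : Fin N, ∑ q : Fin N,
        w p * w q * ψ (x p - x q) *
          ((G p - G q) ⬝ᵥ (landauA dv C γ (v p - v q)).mulVec (G p - G q)) ∧
    0 ≤ ∑ p : Fin N, w p * (G p ⬝ᵥ U p) := by
  set T : Fin N → Fin N → ℝ := fun p q =>
    w p * w q * ψ (x p - x q) * (G p ⬝ᵥ (landauA dv C γ (v p - v q)).mulVec (G p - G q))
    with hT
  set S : Fin N → Fin N → ℝ := fun p q =>
    w p * w q * ψ (x p - x q) *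
      ((G p - G q) ⬝ᵥ (landauA dv C γ (v p - v q)).mulVec (G p - G q)) with hS
  have hD : ∑ p : Fin N, w p * (G p ⬝ᵥ U p) = ∑ p : Fin N, ∑ q : Fin N, T p q := by
    refine Finset.sum_congr rfl fun p _ => ?_
    have hdsum : ∀ (f : Fin N → Fin dv → ℝ), G p ⬝ᵥ (∑ q : Fin N, f q) = ∑ q : Fin N, G p ⬝ᵥ f q := by
      intro f
      simp only [dotProduct, Finset.sum_apply, Finset.mul_sum]
      exact Finset.sum_comm
    rw [hU p, hdsum, Finset.mul_sum]
    refine Finset.sum_congr rfl fun q _ => ?_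
    rw [hb, dotProduct_smul, hT]
    simp only [smul_eq_mul]
    ring
  have key : ∀ p q, T p q + T q p = S p q := by
    intro p q
    have e1 : ψ (x q - x p) = ψ (x p - x q) := by
      rw [← hψ (x p - x q), neg_sub]
    have e2 : landauA dv C γ (v q - v p) = landauA dv C γ (v p - v q) := by
      rw [← landauA_neg dv C γ (v p - v q), neg_sub]
    have e3 : G q - G p = -(G p - G q) := by rw [neg_sub]
    rw [hT, hS]
    simp only [e1, e2, e3, Matrix.mulVec_neg, dotProduct_neg, sub_dotProduct]
    ring
  have hsym : ∑ p : Fin N, ∑ q : Fin N, T p q = ∑ p : Fin N, ∑ q : Fin N, T q p :=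
    Finset.sum_comm
  have hSsum : ∑ p : Fin N, ∑ q : Fin N, S p q
      = 2 * ∑ p : Fin N, ∑ q : Fin N, T p q := by
    calc ∑ p : Fin N, ∑ q : Fin N, S p q
        = ∑ p : Fin N, ∑ q : Fin N, (T p q + T q p) := by
          refine Finset.sum_congr rfl fun p _ => Finset.sum_congr rfl fun q _ => (key p q).symm
      _ = (∑ p : Fin N, ∑ q : Fin N, T p q) + ∑ p : Fin N, ∑ q : Fin N, T q p := by
          simp [Finset.sum_add_distrib]
      _ = 2 * ∑ p : Fin N, ∑ q : Fin N, T p q := by rw [← hsym]; ring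
  have hSnn : 0 ≤ ∑ p : Fin N, ∑ q : Fin N, S p q := by
    refine Finset.sum_nonneg fun p _ => Finset.sum_nonneg fun q _ => ?_
    exact mul_nonneg (mul_nonneg (mul_nonneg (hw p) (hw q)) (hψ0 _))
      (landauA_quad_nonneg dv C γ hC _ _)
  constructor
  · rw [hD, hSsum]; ring
  · rw [hD]; linarith [hSsum, hSnn]
end

section
/- Unbiasedness of the random-batch estimator: let N = m·R with m ≥ 2, R ≥ 1. Let σ be a uniformly distributed random permutation of {0,…,N−1}, and assign particle p to batch B_p = {q : ⌊σ(q)/m⌋ = ⌊σ(p)/m⌋}. Then for any fixed index p and any family of vectors a_q in a real vector space (q ≠ p), the expectation of (R(N−1)/(N−R)) · Σ_{q ≠ p, q ∈ B_p} a_q equals Σ_{q ≠ p} a_q. -/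
/-! Exchangeability: for `q, q' ≠ p` the transposition `(q q')` fixes `p`, so the number of
permutations placing `q` in the batch of `p` does not depend on `q`. Summing it over the `N - 1`
choices of `q` counts, for every permutation, the `m - 1` other members of the batch of `p`.
Hence `q` shares the batch of `p` for a fraction `(m - 1)/(N - 1)` of all permutations, and
`R(N - 1)/(N - R) = (N - 1)/(m - 1)` is exactly the inverse of that fraction. -/

open Finset Equiv Nat

section PermutationAverages

variable {α : Type*} [Fintype α] [DecidableEq α] (r : α → α → Prop) [DecidableRel r]

lemma card_perm_filter_rel_apply_eq {p q q' : α} (hq : q ≠ p) (hq' : q' ≠ p) :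
    #{σ : Perm α | r (σ q) (σ p)} = #{σ : Perm α | r (σ q') (σ p)} :=
  card_equiv (Equiv.mulRight (swap q' q)) fun σ => by
    simp [swap_apply_of_ne_of_ne hq'.symm hq.symm]

lemma card_filter_ne_rel_perm_apply (σ : Perm α) (p : α) :
    #{q | q ≠ p ∧ r (σ q) (σ p)} = #{y | y ≠ σ p ∧ r y (σ p)} :=
  card_equiv σ fun q => by simp

lemma card_perm_filter_rel_mul_card_sub_one {k : ℕ} (hr : ∀ x, #{y | y ≠ x ∧ r y x} = k)
    {p q : α} (hq : q ≠ p) :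
    #{σ : Perm α | r (σ q) (σ p)} * (Fintype.card α - 1) = (Fintype.card α)! * k :=
  calc #{σ : Perm α | r (σ q) (σ p)} * (Fintype.card α - 1)
      = ∑ q' ∈ univ.filter (· ≠ p), #{σ : Perm α | r (σ q') (σ p)} := by
        rw [sum_const_nat fun q' hq' => card_perm_filter_rel_apply_eq r (mem_filter.1 hq').2 hq,
          filter_ne', card_erase_of_mem (mem_univ p), Finset.card_univ, mul_comm]
    _ = ∑ σ : Perm α, #{q' | q' ≠ p ∧ r (σ q') (σ p)} := by
        simpa [bipartiteAbove, bipartiteBelow, filter_filter] using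
          sum_card_bipartiteAbove_eq_sum_card_bipartiteBelow
            (fun q' (σ : Perm α) => r (σ q') (σ p)) (s := univ.filter (· ≠ p)) (t := univ)
    _ = (Fintype.card α)! * k := by
        simp [card_filter_ne_rel_perm_apply, hr, Fintype.card_perm]

lemma sum_perm_sum_filter_rel {M : Type*} [AddCommMonoid M] (p : α) (f : α → M) :
    ∑ σ : Perm α, ∑ q ∈ univ.filter (fun q => q ≠ p ∧ r (σ q) (σ p)), f q
      = ∑ q ∈ univ.filter (· ≠ p), #{σ : Perm α | r (σ q) (σ p)} • f q := by
  simp_rw [← filter_filter, sum_filter (s := univ.filter (· ≠ p))]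
  rw [sum_comm]
  simp_rw [← sum_filter, sum_const]

theorem card_sub_one_nsmul_sum_perm_sum_filter_rel {M : Type*} [AddCommMonoid M] {k : ℕ}
    (hr : ∀ x, #{y | y ≠ x ∧ r y x} = k) (p : α) (f : α → M) :
    (Fintype.card α - 1) • ∑ σ : Perm α, ∑ q ∈ univ.filter (fun q => q ≠ p ∧ r (σ q) (σ p)), f q
      = ((Fintype.card α)! * k) • ∑ q ∈ univ.filter (· ≠ p), f q := by
  rw [sum_perm_sum_filter_rel, smul_sum, smul_sum]
  refine sum_congr rfl fun q hq => ?_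
  rw [smul_smul, mul_comm, card_perm_filter_rel_mul_card_sub_one r hr (mem_filter.1 hq).2]

end PermutationAverages

lemma card_filter_div_eq_div {m R N : ℕ} (hN : N = m * R) (x : Fin N) :
    #{y : Fin N | (y : ℕ) / m = x / m} = m := by
  have hm : 0 < m := Nat.pos_of_ne_zero fun h => by
    have := x.isLt; simp [hN, h] at this
  have hx : x / m * m + m ≤ N := by
    have : x / m < R := Nat.div_lt_of_lt_mul (hN ▸ x.isLt)
    calc x / m * m + m = (x / m + 1) * m := (add_one_mul _ _).symm
      _ ≤ R * m := Nat.mul_le_mul_right m this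
      _ = N := by rw [hN, mul_comm]
  generalize (x : ℕ) / m = k at hx ⊢
  have hblock : (Iio N).filter (· / m = k) = Ico (k * m) (k * m + m) := by
    ext n
    simp only [mem_filter, mem_Iio, mem_Ico, Nat.div_eq_iff hm]
    omega
  calc #{y : Fin N | (y : ℕ) / m = k} = #((Iio N).filter (· / m = k)) := by
        rw [← Fin.map_valEmbedding_univ, filter_map, card_map]; rfl
    _ = m := by rw [hblock, Nat.card_Ico, Nat.add_sub_cancel_left]

lemma card_filter_ne_div_eq_div {m R N : ℕ} (hN : N = m * R) (x : Fin N) :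
    #{y : Fin N | y ≠ x ∧ (y : ℕ) / m = x / m} = m - 1 := by
  have hbatch : univ.filter (fun y : Fin N => y ≠ x ∧ (y : ℕ) / m = x / m)
      = (univ.filter fun y : Fin N => (y : ℕ) / m = x / m).erase x := by
    ext; simp
  rw [hbatch, card_erase_of_mem (by simp), card_filter_div_eq_div hN]

/-- Unbiasedness of the random-batch estimator: partition `N = m·R` particles
(`m ≥ 2`) into `R` batches of size `m` via a uniform random permutation `σ` of
`{0,…,N−1}`, particle `p` lying in batch `⌊σ(p)/m⌋`. For any fixed `p` and any
family of vectors `a_q` in a real vector space, the expectation over `σ` of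
`(R(N−1)/(N−R)) Σ_{q ≠ p, q ∈ B_p} a_q` equals `Σ_{q ≠ p} a_q`. -/
theorem random_batch_unbiased {V : Type*} [AddCommGroup V] [Module ℝ V]
    (m R N : ℕ) (hm : 2 ≤ m) (hR : 1 ≤ R) (hN : N = m * R)
    (p : Fin N) (a : Fin N → V) :
    ((Nat.factorial N : ℝ))⁻¹ •
        ∑ σ : Equiv.Perm (Fin N),
          (((R : ℝ) * ((N : ℝ) - 1)) / ((N : ℝ) - (R : ℝ))) •
            ∑ q ∈ Finset.univ.filter
                (fun q : Fin N => q ≠ p ∧ (σ q : ℕ) / m = (σ p : ℕ) / m), a q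
      = ∑ q ∈ Finset.univ.filter (fun q : Fin N => q ≠ p), a q := by
  have hN2 : 2 ≤ N := by rw [hN]; nlinarith
  have hcount := card_sub_one_nsmul_sum_perm_sum_filter_rel
    (fun x y : Fin N => (x : ℕ) / m = y / m) (card_filter_ne_div_eq_div hN) p a
  rw [Fintype.card_fin, ← Nat.cast_smul_eq_nsmul ℝ, ← Nat.cast_smul_eq_nsmul ℝ,
    ← eq_inv_smul_iff₀ (by simp; omega)] at hcount
  rw [← smul_sum, smul_smul, hcount, smul_smul, smul_smul]
  convert one_smul ℝ _ using 2
  have hNR : (N : ℝ) - R = R * (m - 1) := by rw [hN]; push_cast; ring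
  have hN1 : (N : ℝ) - 1 ≠ 0 := by
    have : (2 : ℝ) ≤ N := by exact_mod_cast hN2
    linarith
  have hm1 : (m : ℝ) - 1 ≠ 0 := by
    have : (2 : ℝ) ≤ m := by exact_mod_cast hm
    linarith
  have hR0 : (R : ℝ) ≠ 0 := by positivity
  rw [Nat.cast_sub (by omega), Nat.cast_mul, Nat.cast_sub (by omega), Nat.cast_one, hNR]
  field_simp
end
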